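/- arXiv:1807.09197 — 3 statements merged into one kernel-verified Lean document; each statement's English description precedes it below -/
import Mathlib

section
/- For any sequence a = (a_i)_{i∈ℤ} in a field of characteristic zero, any integers l ≥ 0 and k ≥ 0, the expansion 1/[t|τ^l a]^k = Σ_{ν=0}^{l} (1/[t|a]^{k+ν}) · {l choose ν}_k^a holds in the rational function field, where {l choose ν}_k^a := Σ_{1 ≤ s_1 < ··· < s_ν ≤ l} ∏_{i=1}^{ν} (a_{k+(ν-i)+s_i} - a_{s_i}). -/
/-- The shifted power `[t|a]^k = (t - a_1)⋯(t - a_k)` in `K(t)`. -/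
noncomputable def spow {K : Type*} [Field K] (a : ℤ → K) (k : ℕ) : RatFunc K :=
  ∏ i ∈ Finset.range k, (RatFunc.X - RatFunc.C (a (i + 1)))

/-- The coefficient `{l choose ν}_k^a = Σ_{1 ≤ s_1 < ⋯ < s_ν ≤ l} ∏_{i=1}^{ν}
(a_{k+(ν-i)+s_i} - a_{s_i})`, where the sum runs over `ν`-element subsets of
`{1, …, l}` listed in increasing order. -/
noncomputable def abinom {R : Type*} [CommRing R] (a : ℤ → R) (l : ℤ) (ν : ℕ) (k : ℤ) : R :=
  ∑ s ∈ Finset.powersetCard ν (Finset.Icc 1 l), ∏ j ∈ Finset.range ν,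
    (a (k + ((ν : ℤ) - 1 - j) + (s.sort (· ≤ ·)).getD j 0)
      - a ((s.sort (· ≤ ·)).getD j 0))

theorem sort_insert_max {x : ℤ} {s : Finset ℤ} (h₁ : ∀ y ∈ s, y ≤ x) (h₂ : x ∉ s) :
    (insert x s).sort (· ≤ ·) = s.sort (· ≤ ·) ++ [x] := by
  apply List.Perm.eq_of_pairwise' (Finset.pairwise_sort _ _)
  · rw [List.pairwise_append]
    refine ⟨Finset.pairwise_sort _ _, List.pairwise_singleton _ x, ?_⟩
    intro b hb c hc
    rw [List.mem_singleton] at hc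
    subst hc
    exact h₁ b ((Finset.mem_sort _).mp hb)
  · rw [← Multiset.coe_eq_coe, ← Multiset.coe_add, Finset.sort_eq, Finset.sort_eq,
      Finset.insert_val, Multiset.ndinsert_of_notMem h₂]
    rw [show ((([x] : List ℤ)) : Multiset ℤ) = {x} from rfl, ← Multiset.singleton_add, add_comm]

theorem abinom_zero {R : Type*} [CommRing R] (a : ℤ → R) (l k : ℤ) :
    abinom a l 0 k = 1 := by
  simp [abinom]

theorem abinom_top {R : Type*} [CommRing R] (a : ℤ → R) (l : ℕ) (ν : ℕ) (k : ℤ)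
    (h : l < ν) : abinom a l ν k = 0 := by
  rw [abinom, Finset.powersetCard_eq_empty.mpr, Finset.sum_empty]
  rw [Int.card_Icc]
  simpa using h

theorem abinom_succ {R : Type*} [CommRing R] (a : ℤ → R) (l : ℕ) (ν : ℕ) (k : ℤ) :
    abinom a ((l:ℤ)+1) (ν+1) k
      = abinom a l (ν+1) k + (a (k + l + 1) - a (l + 1)) * abinom a l ν (k+1) := by
  have hx : ((l:ℤ)+1) ∉ Finset.Icc (1:ℤ) l := by simp
  have hIcc : Finset.Icc (1:ℤ) ((l:ℤ)+1) = insert ((l:ℤ)+1) (Finset.Icc 1 (l:ℤ)) := by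
    ext y
    simp only [Finset.mem_Icc, Finset.mem_insert]
    omega
  rw [abinom, hIcc, Finset.powersetCard_succ_insert hx, Finset.sum_union]
  · congr 1
    rw [Finset.sum_image]
    · rw [abinom, Finset.mul_sum]
      apply Finset.sum_congr rfl
      intro s hs
      rw [Finset.mem_powersetCard] at hs
      have hxs : ((l:ℤ)+1) ∉ s := fun h => by
        have := Finset.mem_Icc.mp (hs.1 h); omega
      have hsort : (insert ((l:ℤ)+1) s).sort (· ≤ ·) = s.sort (· ≤ ·) ++ [(l:ℤ)+1] := by
        apply sort_insert_max _ hxs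
        intro y hy
        have := Finset.mem_Icc.mp (hs.1 hy); omega
      have hlen : (s.sort (· ≤ ·)).length = ν := by rw [Finset.length_sort, hs.2]
      rw [hsort, Finset.prod_range_succ]
      rw [List.getD_append_right _ _ _ _ (by omega)]
      simp only [hlen, Nat.sub_self, List.getD_cons_zero]
      rw [mul_comm]
      have harg : k + ((↑(ν+1):ℤ) - 1 - ↑ν) + ((l:ℤ)+1) = k + ↑l + 1 := by push_cast; ring
      rw [harg]
      congr 1
      · apply Finset.prod_congr rfl
        intro j hj
        rw [Finset.mem_range] at hj
        rw [List.getD_append _ _ _ _ (by omega)]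
        congr 2
        push_cast
        ring
    · intro s hs t ht hst
      rw [Finset.mem_coe, Finset.mem_powersetCard] at hs ht
      have hxs : ((l:ℤ)+1) ∉ s := fun h => by
        have := Finset.mem_Icc.mp (hs.1 h); omega
      have hxt : ((l:ℤ)+1) ∉ t := fun h => by
        have := Finset.mem_Icc.mp (ht.1 h); omega
      rw [← Finset.erase_insert hxs, ← Finset.erase_insert hxt, hst]
  · rw [Finset.disjoint_left]
    intro s hs hs'
    rw [Finset.mem_powersetCard] at hs
    rw [Finset.mem_image] at hs'
    obtain ⟨t, _, rfl⟩ := hs'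
    have := Finset.mem_Icc.mp (hs.1 (Finset.mem_insert_self _ _))
    omega

theorem X_sub_C_ne_zero {K : Type*} [Field K] (r : K) :
    RatFunc.X - RatFunc.C r ≠ (0 : RatFunc K) := by
  rw [← RatFunc.algebraMap_X, ← RatFunc.algebraMap_C, ← map_sub]
  intro h
  have := RatFunc.algebraMap_injective K (h.trans (map_zero _).symm)
  exact Polynomial.X_sub_C_ne_zero r this

theorem spow_ne_zero {K : Type*} [Field K] (a : ℤ → K) (k : ℕ) : spow a k ≠ 0 :=
  Finset.prod_ne_zero_iff.mpr fun _ _ => X_sub_C_ne_zero _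

theorem spow_succ {K : Type*} [Field K] (a : ℤ → K) (k : ℕ) :
    spow a (k+1) = spow a k * (RatFunc.X - RatFunc.C (a ((k:ℤ)+1))) := by
  rw [spow, Finset.prod_range_succ]; rfl

theorem spow_shift_one {K : Type*} [Field K] (a : ℤ → K) (k : ℕ) :
    spow (fun i => a (i+1)) k * (RatFunc.X - RatFunc.C (a 1)) = spow a (k+1) := by
  rw [spow, spow, Finset.prod_range_succ']
  norm_num

theorem inv_eq_mul_inv' {F : Type*} [Field F] (q t : F) (ht : t ≠ 0) :
    q⁻¹ = t * (q * t)⁻¹ := by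
  rcases eq_or_ne q 0 with rfl | hq
  · simp
  · field_simp

theorem step {K : Type*} [Field K] (a : ℤ → K) (k : ℕ) :
    (spow (fun i => a (i+1)) k)⁻¹
      = (spow a k)⁻¹ + (spow a (k+1))⁻¹ * RatFunc.C (a ((k:ℤ)+1) - a 1) := by
  have h1 := X_sub_C_ne_zero (K := K) (a 1)
  have h2 := X_sub_C_ne_zero (K := K) (a ((k:ℤ)+1))
  have hQinv : (spow (fun i => a (i+1)) k)⁻¹
      = (RatFunc.X - RatFunc.C (a 1)) * (spow a (k+1))⁻¹ := by
    rw [← spow_shift_one]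
    exact inv_eq_mul_inv' _ _ h1
  have hPinv : (spow a k)⁻¹
      = (RatFunc.X - RatFunc.C (a ((k:ℤ)+1))) * (spow a (k+1))⁻¹ := by
    rw [spow_succ]
    exact inv_eq_mul_inv' _ _ h2
  rw [hQinv, hPinv, map_sub]
  ring

/-- `1/[t|τ^l a]^k = Σ_{ν=0}^{l} (1/[t|a]^{k+ν}) · {l choose ν}_k^a`. -/
theorem spow_shift_expansion {K : Type*} [Field K] [CharZero K] (a : ℤ → K) (l k : ℕ) :
    (spow (fun i => a (i + l)) k)⁻¹
      = ∑ ν ∈ Finset.range (l + 1), (spow a (k + ν))⁻¹ * RatFunc.C (abinom a l ν k) := by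
  induction l generalizing k with
  | zero =>
    have hfun : (fun i : ℤ => a (i + ((0:ℕ):ℤ))) = a := by funext i; norm_num
    rw [hfun, Finset.sum_range_one, Nat.cast_zero, abinom_zero, map_one, mul_one, Nat.add_zero]
  | succ l ih =>
    have hfun : (fun i : ℤ => a (i + ((l+1:ℕ):ℤ)))
        = (fun i => (fun j : ℤ => a (j + (l:ℤ))) (i + 1)) := by
      funext i; push_cast; ring_nf
    rw [hfun, step (fun j : ℤ => a (j + (l:ℤ))) k, ih k, ih (k+1)]
    have hcast : ((l+1:ℕ):ℤ) = (l:ℤ)+1 := by push_cast; ring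
    have hrhs : ∀ i ∈ Finset.range (l+1),
        (spow a (k + (i+1)))⁻¹ * RatFunc.C (abinom a ((l+1:ℕ):ℤ) (i+1) (k:ℤ))
          = (spow a (k+(i+1)))⁻¹ * RatFunc.C (abinom a (l:ℤ) (i+1) (k:ℤ))
            + (spow a (k+1+i))⁻¹ * RatFunc.C (abinom a (l:ℤ) i ((k+1:ℕ):ℤ))
              * RatFunc.C (a ((k:ℤ) + 1 + (l:ℤ)) - a (1 + (l:ℤ))) := by
      intro i _
      rw [hcast, abinom_succ, map_add, mul_add]
      congr 1
      have hsp : k + (i+1) = k+1+i := by omega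
      have hc1 : ((k+1:ℕ):ℤ) = (k:ℤ)+1 := by push_cast; ring
      have e1 : (k:ℤ) + (l:ℤ) + 1 = (k:ℤ)+1+(l:ℤ) := by ring
      have e2 : (l:ℤ)+1 = 1+(l:ℤ) := by ring
      rw [hsp, hc1, map_mul, e1, e2]
      ring
    have hzero : (spow a (k+(l+1)))⁻¹ * RatFunc.C (abinom a (l:ℤ) (l+1) (k:ℤ)) = 0 := by
      rw [abinom_top a l (l+1) k (by omega), map_zero, mul_zero]
    rw [Finset.sum_range_succ' (fun ν => (spow a (k + ν))⁻¹ * RatFunc.C (abinom a ((l+1:ℕ):ℤ) ν (k:ℤ))) (l+1),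
      Finset.sum_congr rfl hrhs, Finset.sum_add_distrib,
      show (∑ ν ∈ Finset.range (l + 1), (spow a (k + ν))⁻¹ * RatFunc.C (abinom a (l:ℤ) ν (k:ℤ)))
          = ∑ i ∈ Finset.range (l+1), (spow a (k + (i+1)))⁻¹ * RatFunc.C (abinom a (l:ℤ) (i+1) (k:ℤ))
            + (spow a (k+0))⁻¹ * RatFunc.C (abinom a (l:ℤ) 0 (k:ℤ)) from by
        rw [← Finset.sum_range_succ' (fun ν => (spow a (k + ν))⁻¹ * RatFunc.C (abinom a (l:ℤ) ν (k:ℤ))) (l+1),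
          Finset.sum_range_succ (fun ν => (spow a (k + ν))⁻¹ * RatFunc.C (abinom a (l:ℤ) ν (k:ℤ))) (l+1),
          hzero, add_zero],
      Finset.sum_mul]
    rw [abinom_zero, abinom_zero]
    ring
end

section
/- The coefficients {l choose ν}_k^a satisfy the Pascal-type recursion {l choose ν}_k^{τa} + (a_{k+ν} - a_1)·{l choose ν-1}_k^{τa} = {l+1 choose ν}_k^a for all l ≥ 0, ν ≥ 1, k ≥ 0 and any sequence a. -/
open Finset

lemma getD_map_add (t : Finset ℤ) (c : ℤ) {n j : ℕ} (ht : t.card = n) (hj : j < n) :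
    (((t.sort (· ≤ ·)).map (· + c))).getD j 0 = (t.sort (· ≤ ·)).getD j 0 + c := by
  have h1 : j < ((t.sort (· ≤ ·)).map (· + c)).length := by
    simp [Finset.length_sort, ht, hj]
  have h2 : j < (t.sort (· ≤ ·)).length := by simp [Finset.length_sort, ht, hj]
  rw [List.getD_eq_getElem _ _ h1, List.getD_eq_getElem _ _ h2, List.getElem_map]

lemma sort_image_add (t : Finset ℤ) (c : ℤ) :
    ((t.image (· + c)).sort (· ≤ ·)) = (t.sort (· ≤ ·)).map (· + c) := by
  refine (fun hp hs => List.Perm.eq_of_pairwise' (Finset.pairwise_sort _ _) hs hp) ?_ ?_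
  · rw [← Multiset.coe_eq_coe, Finset.sort_eq, ← Multiset.map_coe, Finset.sort_eq,
      Finset.image_val_of_injOn (fun x _ y _ h => by simpa using h)]
  · have h := Finset.pairwise_sort t (· ≤ ·)
    simp only [List.pairwise_map] at h ⊢
    exact h.imp (by intro a b hab; omega)

lemma getD_sort_image_add (t : Finset ℤ) (c : ℤ) {n j : ℕ} (ht : t.card = n) (hj : j < n) :
    ((t.image (· + c)).sort (· ≤ ·)).getD j 0 = (t.sort (· ≤ ·)).getD j 0 + c := by
  rw [sort_image_add]; exact getD_map_add t c ht hj

/-- Pascal-type recursion: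
`{l choose ν}_k^{τa} + (a_{k+ν} - a_1)·{l choose ν-1}_k^{τa} = {l+1 choose ν}_k^a`,
where `(τa)_i = a_{i+1}`. -/
theorem abinom_pascal {R : Type*} [CommRing R] (a : ℤ → R) (l : ℕ) (ν : ℕ) (hν : 1 ≤ ν)
    (k : ℕ) :
    abinom (fun i => a (i + 1)) l ν k
      + (a (k + ν) - a 1) * abinom (fun i => a (i + 1)) l (ν - 1) k
      = abinom a (l + 1) ν k := by
  obtain ⟨m, rfl⟩ : ∃ m, ν = m + 1 := ⟨ν - 1, by omega⟩
  simp only [Nat.add_sub_cancel]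
  unfold abinom
  beta_reduce
  rw [Finset.mul_sum]
  conv_rhs => rw [← Finset.sum_filter_add_sum_filter_not
      (Finset.powersetCard (m+1) (Finset.Icc 1 ((l : ℤ)+1))) (fun s => (1:ℤ) ∈ s), add_comm]
  congr 1
  · refine Finset.sum_nbij' (i := fun t => t.image (· + 1))
      (j := fun s => s.image (· + (-1))) ?_ ?_ ?_ ?_ ?_
    · intro t ht
      rw [Finset.mem_powersetCard] at ht
      rw [Finset.mem_filter, Finset.mem_powersetCard]
      refine ⟨⟨?_, ?_⟩, ?_⟩
      · intro x hx
        simp only [Finset.mem_image] at hx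
        obtain ⟨y, hy, rfl⟩ := hx
        have := ht.1 hy
        rw [Finset.mem_Icc] at *
        omega
      · rw [Finset.card_image_of_injective _ (add_left_injective 1), ht.2]
      · simp only [Finset.mem_image]
        rintro ⟨y, hy, h⟩
        have := ht.1 hy
        rw [Finset.mem_Icc] at this
        omega
    · intro s hs
      rw [Finset.mem_filter, Finset.mem_powersetCard] at hs
      rw [Finset.mem_powersetCard]
      constructor
      · intro x hx
        simp only [Finset.mem_image] at hx
        obtain ⟨y, hy, rfl⟩ := hx
        have h1 := hs.1.1 hy
        have h2 : y ≠ 1 := fun h => hs.2 (h ▸ hy)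
        rw [Finset.mem_Icc] at *
        omega
      · rw [Finset.card_image_of_injective _ (add_left_injective (-1)), hs.1.2]
    · intro t _
      rw [Finset.image_image]
      have h2 : ∀ x : ℤ, ((· + (-1)) ∘ (· + 1)) x = id x := fun x => by simp
      rw [Finset.image_congr fun x _ => h2 x, Finset.image_id]
    · intro s _
      rw [Finset.image_image]
      have h2 : ∀ x : ℤ, ((· + 1) ∘ (· + (-1))) x = id x := fun x => by simp
      rw [Finset.image_congr fun x _ => h2 x, Finset.image_id]
    · intro t ht
      rw [Finset.mem_powersetCard] at ht
      refine Finset.prod_congr rfl fun j hj => ?_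
      rw [Finset.mem_range] at hj
      rw [getD_sort_image_add t 1 ht.2 hj]
      push_cast
      ring_nf
  · refine Finset.sum_nbij' (i := fun t => insert (1:ℤ) (t.image (· + 1)))
      (j := fun s => (s.erase 1).image (· + (-1))) ?_ ?_ ?_ ?_ ?_
    · intro t ht
      rw [Finset.mem_powersetCard] at ht
      have hni : (1:ℤ) ∉ t.image (· + 1) := by
        simp only [Finset.mem_image]
        rintro ⟨y, hy, h⟩
        have := ht.1 hy
        rw [Finset.mem_Icc] at this
        omega
      rw [Finset.mem_filter, Finset.mem_powersetCard]
      refine ⟨⟨?_, ?_⟩, Finset.mem_insert_self 1 _⟩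
      · rw [Finset.insert_subset_iff]
        refine ⟨by rw [Finset.mem_Icc]; omega, ?_⟩
        intro x hx
        simp only [Finset.mem_image] at hx
        obtain ⟨y, hy, rfl⟩ := hx
        have := ht.1 hy
        rw [Finset.mem_Icc] at *
        omega
      · rw [Finset.card_insert_of_notMem hni,
          Finset.card_image_of_injective _ (add_left_injective 1), ht.2]
    · intro s hs
      rw [Finset.mem_filter, Finset.mem_powersetCard] at hs
      rw [Finset.mem_powersetCard]
      constructor
      · intro x hx
        simp only [Finset.mem_image, Finset.mem_erase] at hx
        obtain ⟨y, ⟨hy1, hy⟩, rfl⟩ := hx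
        have := hs.1.1 hy
        rw [Finset.mem_Icc] at *
        omega
      · rw [Finset.card_image_of_injective _ (add_left_injective (-1)),
          Finset.card_erase_of_mem hs.2, hs.1.2]
        omega
    · intro t ht
      rw [Finset.mem_powersetCard] at ht
      rw [Finset.erase_insert (by
        simp only [Finset.mem_image]
        rintro ⟨y, hy, h⟩
        have := ht.1 hy
        rw [Finset.mem_Icc] at this
        omega), Finset.image_image]
      have h2 : ∀ x : ℤ, ((· + (-1)) ∘ (· + 1)) x = id x := fun x => by simp
      rw [Finset.image_congr fun x _ => h2 x, Finset.image_id]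
    · intro s hs
      rw [Finset.mem_filter] at hs
      rw [Finset.image_image]
      have h2 : ∀ x : ℤ, ((· + 1) ∘ (· + (-1))) x = id x := fun x => by simp
      rw [Finset.image_congr fun x _ => h2 x, Finset.image_id, Finset.insert_erase hs.2]
    · intro t ht
      rw [Finset.mem_powersetCard] at ht
      have hsort : (insert (1:ℤ) (t.image (· + 1))).sort (· ≤ ·)
          = 1 :: (t.sort (· ≤ ·)).map (· + 1) := by
        rw [Finset.sort_insert]
        · rw [sort_image_add]
        · intro b hb
          simp only [Finset.mem_image] at hb
          obtain ⟨y, hy, rfl⟩ := hb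
          have := ht.1 hy
          rw [Finset.mem_Icc] at this
          omega
        · simp only [Finset.mem_image]
          rintro ⟨y, hy, h⟩
          have := ht.1 hy
          rw [Finset.mem_Icc] at this
          omega
      rw [hsort, Finset.prod_range_succ']
      simp only [List.getD_cons_succ, List.getD_cons_zero]
      rw [mul_comm]
      congr 1
      · refine Finset.prod_congr rfl fun j hj => ?_
        rw [Finset.mem_range] at hj
        rw [getD_map_add t 1 ht.2 hj]
        push_cast
        ring_nf
      · push_cast
        ring_nf
end

section
/- If the sequence a is equidistant with constant c, i.e. a_{n+k} - a_k = c·n for all n, k ∈ ℤ, then {k choose ν}_k^a = c^ν · C(k,ν) · (k+ν-1)(k+ν-2)···(k), i.e. {k choose ν}_k^a = c^ν · C(k,ν) · (k+ν-1)↓ν, where x↓ν = x(x-1)···(x-ν+1) is the falling factorial and C(k,ν) the binomial coefficient. -/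
/-- If `a` is equidistant with constant `c`, i.e. `a_{n+k} - a_k = c·n`, then
`{k choose ν}_k^a = c^ν · C(k,ν) · (k+ν-1)↓ν` (falling factorial). -/
theorem abinom_equidistant {K : Type*} [Field K] [CharZero K] (a : ℤ → K) (c : K)
    (hc : ∀ n k : ℤ, a (n + k) - a k = c * n) (k ν : ℕ) :
    abinom a k ν k
      = c ^ ν * (k.choose ν : K) * ((k + ν - 1).descFactorial ν : K) := by
  unfold abinom
  have hprod : ∀ s : Finset ℤ,
      (∏ j ∈ Finset.range ν,
        (a (k + ((ν : ℤ) - 1 - j) + (s.sort (· ≤ ·)).getD j 0)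
          - a ((s.sort (· ≤ ·)).getD j 0)))
      = c ^ ν * ∏ j ∈ Finset.range ν, ((k : K) + ν - 1 - j) := by
    intro s
    have h1 : ∀ j ∈ Finset.range ν,
        (a (k + ((ν : ℤ) - 1 - j) + (s.sort (· ≤ ·)).getD j 0)
          - a ((s.sort (· ≤ ·)).getD j 0)) = c * ((k : K) + ν - 1 - j) := by
      intro j _
      have := hc ((k : ℤ) + ((ν : ℤ) - 1 - j)) ((s.sort (· ≤ ·)).getD j 0)
      rw [this]
      push_cast
      ring
    rw [Finset.prod_congr rfl h1, Finset.prod_mul_distrib, Finset.prod_const,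
      Finset.card_range]
  rw [Finset.sum_congr rfl (fun s _ => hprod s), Finset.sum_const, Finset.card_powersetCard]
  have hcard : (Finset.Icc (1 : ℤ) (k : ℤ)).card = k := by
    rw [Int.card_Icc]; simp
  rw [hcard]
  have hdesc : ∏ j ∈ Finset.range ν, ((k : K) + ν - 1 - j)
      = ((k + ν - 1).descFactorial ν : K) := by
    rcases Nat.eq_zero_or_pos ν with h | h
    · simp [h]
    · rw [Nat.descFactorial_eq_prod_range, Nat.cast_prod]
      apply Finset.prod_congr rfl
      intro j hj
      have hj' : j ≤ k + ν - 1 := by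
        have := Finset.mem_range.mp hj; omega
      have h1 : (1 : ℕ) ≤ k + ν := by omega
      push_cast [Nat.cast_sub hj', Nat.cast_sub h1]
      ring
  rw [hdesc]
  simp [mul_comm, mul_assoc, mul_left_comm]
end
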